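/- Over the field ℚ, let B be the 8×8 nilpotent Jordan matrix of shape (5,3), i.e. the block-diagonal matrix J(5,3) with Jordan blocks of sizes 5 and 3. Then there exists a nilpotent 8×8 matrix A over ℚ with AB = BA whose shape is (2,2,2,2). -/
import Mathlib


/-- A nilpotent `n × n` matrix `A` has shape (Jordan type) given by the multiset of parts `μ`
(a partition of `n` with positive parts) if for every `k ≥ 0` the dimension of the kernel of
`A ^ k` equals `Σ_j min (μ_j, k)`. -/
def hasShape {n : ℕ} {F : Type*} [Field F] (A : Matrix (Fin n) (Fin n) F)
    (μ : Multiset ℕ) : Prop :=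
  (∀ i ∈ μ, 0 < i) ∧ μ.sum = n ∧
    ∀ k : ℕ, Module.finrank F (LinearMap.ker ((A ^ k).mulVecLin)) =
      (μ.map (fun m => min m k)).sum

/-- The nilpotent Jordan matrix `J(5,3)` of shape `(5,3)`: the block-diagonal
matrix with Jordan blocks (with eigenvalue `0`) of sizes 5,3. -/
def B0 : Matrix (Fin 8) (Fin 8) ℚ :=
  Matrix.of fun i j => if (j : ℕ) = (i : ℕ) + 1 ∧ (i : ℕ) ≠ 4 then 1 else 0

/-- The commuting square-zero matrix of rank 4. -/
def A0 : Matrix (Fin 8) (Fin 8) ℚ :=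
  Matrix.of fun i j =>
    if ((j : ℕ) = (i : ℕ) + 1 ∧ (i : ℕ) ≤ 3) ∨ (j : ℕ) = (i : ℕ) + 5 then 1
    else if ((j : ℕ) + 3 = (i : ℕ) ∧ 5 ≤ (i : ℕ)) ∨ ((j : ℕ) = (i : ℕ) + 1 ∧ 5 ≤ (i : ℕ)) then -1
    else 0

/-- Left factor of `A0` witnessing `rank ≤ 4`. -/
def E0 : Matrix (Fin 8) (Fin 4) ℚ :=
  Matrix.of fun i j =>
    if (i : ℕ) = (j : ℕ) then 1
    else if (i : ℕ) = (j : ℕ) + 4 ∧ 1 ≤ (j : ℕ) then -1 else 0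

/-- Right factor of `A0` witnessing `rank ≤ 4`. -/
def F0 : Matrix (Fin 4) (Fin 8) ℚ :=
  Matrix.of fun i j =>
    if (j : ℕ) = (i : ℕ) + 1 ∨ (j : ℕ) = (i : ℕ) + 5 then 1 else 0

/-- Row selector witnessing `rank ≥ 4`. -/
def G0 : Matrix (Fin 4) (Fin 8) ℚ :=
  Matrix.of fun i j => if (j : ℕ) = (i : ℕ) then 1 else 0

/-- Column selector witnessing `rank ≥ 4`. -/
def H0 : Matrix (Fin 8) (Fin 4) ℚ :=
  Matrix.of fun i j => if (i : ℕ) = (j : ℕ) + 1 then 1 else 0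

lemma f8_0 : ((0:Fin 8):ℕ) = 0 := rfl
lemma f8_1 : ((1:Fin 8):ℕ) = 1 := rfl
lemma f8_2 : ((2:Fin 8):ℕ) = 2 := rfl
lemma f8_3 : ((3:Fin 8):ℕ) = 3 := rfl
lemma f8_4 : ((4:Fin 8):ℕ) = 4 := rfl
lemma f8_5 : ((5:Fin 8):ℕ) = 5 := rfl
lemma f8_6 : ((6:Fin 8):ℕ) = 6 := rfl
lemma f8_7 : ((7:Fin 8):ℕ) = 7 := rfl
lemma f4_0 : ((0:Fin 4):ℕ) = 0 := rfl
lemma f4_1 : ((1:Fin 4):ℕ) = 1 := rfl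
lemma f4_2 : ((2:Fin 4):ℕ) = 2 := rfl
lemma f4_3 : ((3:Fin 4):ℕ) = 3 := rfl

set_option maxHeartbeats 1000000 in
lemma hA2 : A0 * A0 = 0 := by
  ext i j
  simp only [A0, Matrix.mul_apply, Matrix.of_apply, Matrix.zero_apply, Fin.sum_univ_eight]
  fin_cases i <;> fin_cases j <;>
    norm_num [f8_0, f8_1, f8_2, f8_3, f8_4, f8_5, f8_6, f8_7]

set_option maxHeartbeats 1000000 in
lemma hAB : A0 * B0 = B0 * A0 := by
  ext i j
  simp only [A0, B0, Matrix.mul_apply, Matrix.of_apply, Fin.sum_univ_eight]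
  fin_cases i <;> fin_cases j <;>
    norm_num [f8_0, f8_1, f8_2, f8_3, f8_4, f8_5, f8_6, f8_7]

set_option maxHeartbeats 1000000 in
lemma hEF : A0 = E0 * F0 := by
  ext i j
  simp only [A0, E0, F0, Matrix.mul_apply, Matrix.of_apply, Fin.sum_univ_four]
  fin_cases i <;> fin_cases j <;>
    norm_num [f8_0, f8_1, f8_2, f8_3, f8_4, f8_5, f8_6, f8_7, f4_0, f4_1, f4_2, f4_3]

set_option maxHeartbeats 1000000 in
lemma hGAH : G0 * A0 * H0 = 1 := by
  ext i j
  simp only [A0, G0, H0, Matrix.mul_apply, Matrix.of_apply, Matrix.one_apply,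
    Fin.sum_univ_eight]
  fin_cases i <;> fin_cases j <;>
    norm_num [f8_0, f8_1, f8_2, f8_3, f8_4, f8_5, f8_6, f8_7, f4_0, f4_1, f4_2, f4_3,
      Fin.ext_iff]

lemma hrank : A0.rank = 4 := by
  apply le_antisymm
  · calc A0.rank = (E0 * F0).rank := by rw [← hEF]
      _ ≤ F0.rank := Matrix.rank_mul_le_right _ _
      _ ≤ Fintype.card (Fin 4) := F0.rank_le_card_height
      _ = 4 := by simp
  · calc (4 : ℕ) = (1 : Matrix (Fin 4) (Fin 4) ℚ).rank := by
          rw [Matrix.rank_one]; simp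
      _ = (G0 * A0 * H0).rank := by rw [hGAH]
      _ ≤ (G0 * A0).rank := Matrix.rank_mul_le_left _ _
      _ ≤ A0.rank := Matrix.rank_mul_le_right _ _

lemma hker : Module.finrank ℚ (LinearMap.ker A0.mulVecLin) = 4 := by
  have h := LinearMap.finrank_range_add_finrank_ker A0.mulVecLin
  have h8 : Module.finrank ℚ (Fin 8 → ℚ) = 8 := by simp
  rw [h8] at h
  have h4 : A0.rank = Module.finrank ℚ (LinearMap.range A0.mulVecLin) := rfl
  rw [hrank] at h4
  omega

/-- There is a nilpotent matrix `A` over `ℚ` commuting with `B0 = J(5,3)` whose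
shape is `(2,2,2,2)`. -/
theorem stmt_14 :
    ∃ A : Matrix (Fin 8) (Fin 8) ℚ, IsNilpotent A ∧ A * B0 = B0 * A ∧
      hasShape A ({2, 2, 2, 2} : Multiset ℕ) := by
  refine ⟨A0, ⟨2, by rw [pow_two, hA2]⟩, hAB, ?_, by decide, ?_⟩
  · intro i hi
    fin_cases hi <;> norm_num
  · intro k
    match k with
    | 0 => simp
    | 1 =>
      rw [pow_one, hker]
      decide
    | (n + 2) =>
      have hpow : A0 ^ (n + 2) = 0 := by
        rw [pow_add, pow_two, hA2, mul_zero]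
      rw [hpow]
      have hsum : (({2, 2, 2, 2} : Multiset ℕ).map fun m => min m (n + 2)).sum = 8 := by
        have h2 : min 2 (n + 2) = 2 := by omega
        simp [h2]
      rw [hsum, Matrix.mulVecLin_zero, LinearMap.ker_zero]
      simpa using finrank_top ℚ (Fin 8 → ℚ)
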